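/- Let d_max ∈ (0,1), let X_min, X_max be reals with -1 < X_min < 0 < X_max, let N be a positive integer, and let r_f(0),...,r_f(N-1) be reals with 0 ≤ r_f(k) < X_max. Let a trading policy be given by functions u_k mapping each return history (X(0),...,X(k-1)) ∈ [X_min, X_max]^k to an investment amount, and for each return sequence define V(0) > 0 (fixed) and V(k+1) = V(k) + u_k(X(0),...,X(k-1))·X(k) + (V(k) − u_k(X(0),...,X(k-1)))·r_f(k). Then the policy guarantees d(k) ≤ d_max for all 0 ≤ k ≤ N and every return sequence in [X_min, X_max]^N if and only if for every k ≤ N−1 and every return sequence, −((M(k) + r_f(k))/(X_max − r_f(k)))·V(k) ≤ u_k(X(0),...,X(k-1)) ≤ ((M(k) + r_f(k))/(|X_min| + r_f(k)))·V(k), where d(k) = (V_max(k) − V(k))/V_max(k), V_max(k) = max_{0≤i≤k} V(i), and M(k) = (d_max − d(k))/(1 − d(k)). -/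

import Mathlib

/-!
Since `d(k) ≤ d_max ↔ (1 - d_max) V_max(k) ≤ V(k)` and
`M(k) V(k) = V(k) - (1 - d_max) V_max(k)`, one step of the dynamics gives
`V(k+1) - (1 - d_max) V_max(k) = (M(k) + r_f(k)) V(k) + u(k) (X(k) - r_f(k))`,
while `V_max(k+1) = max (V(k+1)) (V_max(k))`. So the drawdown limit propagates from `k` to
`k + 1` exactly when this expression, affine in `X(k)`, is nonnegative; on `[X_min, X_max]` that
means nonnegative at both endpoints, which are the two modulation bounds. Sufficiency is then an
induction on `k`. For necessity, causality makes `V(0), …, V(k)` and `u(k)` independent of `X(k)`,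
which may therefore be chosen freely in `[X_min, X_max]`.
-/

/-- The running maximum `V_max(k) = max_{0 ≤ i ≤ k} V(i)` of the account value. -/
noncomputable def runMax (V : ℕ → ℝ) (k : ℕ) : ℝ :=
  (Finset.range (k + 1)).sup' (Finset.nonempty_range_iff.mpr k.succ_ne_zero) V

/-- The percentage drawdown `d(k) = (V_max(k) − V(k)) / V_max(k)`. -/
noncomputable def drawdown (V : ℕ → ℝ) (k : ℕ) : ℝ :=
  (runMax V k - V k) / runMax V k

/-- The modulation function `M(k) = (d_max − d(k)) / (1 − d(k))`. -/
noncomputable def modFn (dmax : ℝ) (V : ℕ → ℝ) (k : ℕ) : ℝ :=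
  (dmax - drawdown V k) / (1 - drawdown V k)

/-- The account value process generated by a causal policy
`π k : (X(0),…,X(k−1)) ↦ u(k)` along the return sequence `X`:
`V(0) = V0` and `V(k+1) = V(k) + u(k)·X(k) + (V(k) − u(k))·r_f(k)`. -/
noncomputable def wealth (V0 : ℝ) (rf : ℕ → ℝ)
    (π : (k : ℕ) → (Fin k → ℝ) → ℝ) (X : ℕ → ℝ) : ℕ → ℝ
  | 0 => V0
  | k + 1 =>
      wealth V0 rf π X k + π k (fun i => X i) * X k +
        (wealth V0 rf π X k - π k (fun i => X i)) * rf k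

open Set Function

section RunningMaximum

variable {V : ℕ → ℝ}

lemma le_runMax (V : ℕ → ℝ) {i k : ℕ} (h : i ≤ k) : V i ≤ runMax V k :=
  Finset.le_sup' V (Finset.mem_range.mpr (Nat.lt_succ_of_le h))

lemma runMax_zero (V : ℕ → ℝ) : runMax V 0 = V 0 := by
  simp [runMax]

lemma runMax_succ (V : ℕ → ℝ) (k : ℕ) :
    runMax V (k + 1) = max (V (k + 1)) (runMax V k) := by
  unfold runMax
  rw [Finset.sup'_congr _ (Finset.range_add_one (n := k + 1)) fun _ _ => rfl, Finset.sup'_insert]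

lemma runMax_pos (h : 0 < V 0) (k : ℕ) : 0 < runMax V k :=
  h.trans_le (le_runMax V k.zero_le)

lemma runMax_congr {W : ℕ → ℝ} {k : ℕ} (h : ∀ i ≤ k, V i = W i) :
    runMax V k = runMax W k :=
  Finset.sup'_congr _ rfl fun i hi => h i (Nat.lt_succ_iff.mp (Finset.mem_range.mp hi))

lemma mul_runMax_succ_le_iff {k : ℕ} {c : ℝ} (hc0 : 0 ≤ c) (hc1 : c ≤ 1)
    (hm : 0 ≤ runMax V k) :
    c * runMax V (k + 1) ≤ V (k + 1) ↔ c * runMax V k ≤ V (k + 1) := by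
  rw [runMax_succ, mul_max_of_nonneg _ _ hc0, max_le_iff]
  refine ⟨And.right, fun h => ⟨?_, h⟩⟩
  nlinarith [mul_nonneg hc0 hm]

lemma drawdown_le_iff {k : ℕ} {d : ℝ} (hm : 0 < runMax V k) :
    drawdown V k ≤ d ↔ (1 - d) * runMax V k ≤ V k := by
  rw [drawdown, div_le_iff₀ hm]
  constructor <;> intro <;> linarith

lemma modFn_mul_self (dmax : ℝ) {k : ℕ} (hm : 0 < runMax V k) (hV : V k ≠ 0) :
    modFn dmax V k * V k = V k - (1 - dmax) * runMax V k := by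
  have h : 1 - drawdown V k = V k / runMax V k := by
    rw [drawdown]; field_simp; ring
  rw [modFn, h, drawdown]
  field_simp
  ring

end RunningMaximum

lemma forall_mem_Icc_nonneg_add_mul_iff {a b lo hi : ℝ} (h : lo ≤ hi) :
    (∀ x ∈ Icc lo hi, 0 ≤ a + b * x) ↔ 0 ≤ a + b * lo ∧ 0 ≤ a + b * hi := by
  refine ⟨fun H => ⟨H lo (left_mem_Icc.2 h), H hi (right_mem_Icc.2 h)⟩, ?_⟩
  rintro ⟨hlo, hhi⟩ x ⟨hx₁, hx₂⟩
  rcases le_total 0 b with hb | hb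
  · nlinarith
  · nlinarith

lemma neg_div_mul_le_and_le_div_mul_iff {P V u r lo hi : ℝ} (hlo : lo < 0) (hr : 0 ≤ r)
    (hrhi : r < hi) :
    (-(P / (hi - r)) * V ≤ u ∧ u ≤ P / (|lo| + r) * V) ↔
      ∀ x ∈ Icc lo hi, 0 ≤ P * V + u * (x - r) := by
  have hhi : 0 < hi - r := sub_pos.2 hrhi
  have hlo' : 0 < |lo| + r := by rw [abs_of_neg hlo]; linarith
  have hlin : ∀ x, P * V + u * (x - r) = (P * V - u * r) + u * x := fun x => by ring
  rw [abs_of_neg hlo] at hlo' ⊢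
  simp_rw [hlin, forall_mem_Icc_nonneg_add_mul_iff (by linarith : lo ≤ hi), neg_mul, neg_le,
    div_mul_eq_mul_div, le_div_iff₀ hhi, le_div_iff₀ hlo']
  constructor <;> rintro ⟨h₁, h₂⟩ <;> constructor <;> linarith

lemma sub_mul_runMax_eq_modFn (dmax : ℝ) {V : ℕ → ℝ} {k : ℕ} (u x r : ℝ)
    (hm : 0 < runMax V k) (hV : V k ≠ 0) :
    V k + u * x + (V k - u) * r - (1 - dmax) * runMax V k =
      (modFn dmax V k + r) * V k + u * (x - r) := by
  linear_combination (-1 : ℝ) * modFn_mul_self dmax hm hV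

section Wealth

variable {V0 : ℝ} {rf : ℕ → ℝ} {π : (k : ℕ) → (Fin k → ℝ) → ℝ}

lemma wealth_congr {X Y : ℕ → ℝ} {k : ℕ} (h : ∀ i < k, X i = Y i) :
    wealth V0 rf π X k = wealth V0 rf π Y k := by
  induction k with
  | zero => rfl
  | succ k ih =>
    have hpast : (fun i : Fin k => X i) = fun i : Fin k => Y i :=
      funext fun i => h i (Nat.lt_succ_of_lt i.2)
    simp only [wealth, ih fun i hi => h i (Nat.lt_succ_of_lt hi), hpast, h k k.lt_succ_self]

lemma wealth_update_of_le (X : ℕ → ℝ) {i k : ℕ} (x : ℝ) (h : i ≤ k) :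
    wealth V0 rf π (update X k x) i = wealth V0 rf π X i :=
  wealth_congr fun _ hj => update_of_ne (hj.trans_le h).ne _ _

lemma wealth_update_succ (X : ℕ → ℝ) (k : ℕ) (x : ℝ) :
    wealth V0 rf π (update X k x) (k + 1) =
      wealth V0 rf π X k + π k (fun i => X i) * x +
        (wealth V0 rf π X k - π k (fun i => X i)) * rf k := by
  have hpast : (fun i : Fin k => update X k x i) = fun i : Fin k => X i :=
    funext fun i => update_of_ne i.2.ne _ _
  simp only [wealth, hpast, wealth_update_of_le X x le_rfl, update_self]

lemma runMax_wealth_pos (hV0 : 0 < V0) (X : ℕ → ℝ) (k : ℕ) :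
    0 < runMax (wealth V0 rf π X) k :=
  runMax_pos hV0 k

end Wealth

section Modulation

variable {dmax Xmin Xmax V0 : ℝ} {N : ℕ} {rf : ℕ → ℝ} {π : (k : ℕ) → (Fin k → ℝ) → ℝ}

def ModulationBounds (dmax Xmin Xmax V0 : ℝ) (rf : ℕ → ℝ) (π : (k : ℕ) → (Fin k → ℝ) → ℝ)
    (X : ℕ → ℝ) (k : ℕ) : Prop :=
  -((modFn dmax (wealth V0 rf π X) k + rf k) / (Xmax - rf k)) * wealth V0 rf π X k ≤
      π k (fun i => X i) ∧
    π k (fun i => X i) ≤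
      ((modFn dmax (wealth V0 rf π X) k + rf k) / (|Xmin| + rf k)) * wealth V0 rf π X k

theorem drawdown_le_of_modulationBounds (hdmax0 : 0 ≤ dmax) (hdmax1 : dmax < 1)
    (hXmin0 : Xmin < 0) (hrf : ∀ k < N, 0 ≤ rf k ∧ rf k < Xmax) (hV0 : 0 < V0) {X : ℕ → ℝ}
    (hX : ∀ k < N, Xmin ≤ X k ∧ X k ≤ Xmax)
    (hbounds : ∀ k < N, ModulationBounds dmax Xmin Xmax V0 rf π X k) :
    ∀ k ≤ N, drawdown (wealth V0 rf π X) k ≤ dmax := by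
  set W := wealth V0 rf π X
  have hm : ∀ k, 0 < runMax W k := runMax_wealth_pos hV0 X
  suffices h : ∀ k ≤ N, (1 - dmax) * runMax W k ≤ W k from
    fun k hk => (drawdown_le_iff (hm k)).2 (h k hk)
  intro k
  induction k with
  | zero =>
    exact fun _ => (runMax_zero W).symm ▸ mul_le_of_le_one_left hV0.le (sub_le_self _ hdmax0)
  | succ k ih =>
    intro hk
    have hkN : k < N := hk
    have hWk : 0 < W k := (mul_pos (sub_pos.2 hdmax1) (hm k)).trans_le (ih hkN.le)
    have hstep := (neg_div_mul_le_and_le_div_mul_iff hXmin0 (hrf k hkN).1 (hrf k hkN).2).1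
      (hbounds k hkN) (X k) (hX k hkN)
    set u := π k (fun i => X i)
    have hW : W (k + 1) = W k + u * X k + (W k - u) * rf k := rfl
    rw [mul_runMax_succ_le_iff (sub_nonneg.2 hdmax1.le) (sub_le_self _ hdmax0) (hm k).le]
    linarith [sub_mul_runMax_eq_modFn dmax u (X k) (rf k) (hm k) hWk.ne']

theorem modulationBounds_of_drawdown_le (hdmax0 : 0 ≤ dmax) (hdmax1 : dmax < 1)
    (hXmin0 : Xmin < 0) (hrf : ∀ k < N, 0 ≤ rf k ∧ rf k < Xmax) (hV0 : 0 < V0)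
    (h : ∀ X : ℕ → ℝ, (∀ k < N, Xmin ≤ X k ∧ X k ≤ Xmax) →
      ∀ k ≤ N, drawdown (wealth V0 rf π X) k ≤ dmax)
    {X : ℕ → ℝ} (hX : ∀ k < N, Xmin ≤ X k ∧ X k ≤ Xmax) {k : ℕ} (hk : k < N) :
    ModulationBounds dmax Xmin Xmax V0 rf π X k := by
  set W := wealth V0 rf π X
  have hm := runMax_wealth_pos (rf := rf) (π := π) hV0
  have hWk : (1 - dmax) * runMax W k ≤ W k := (drawdown_le_iff (hm X k)).1 (h X hX k hk.le)
  have hWk_pos : 0 < W k := (mul_pos (sub_pos.2 hdmax1) (hm X k)).trans_le hWk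
  rw [ModulationBounds, neg_div_mul_le_and_le_div_mul_iff hXmin0 (hrf k hk).1 (hrf k hk).2]
  intro x hx
  -- Test the guarantee on the path with `X k` reset to `x`; by causality this changes neither
  -- `W 0, …, W k` nor the decision `π k`.
  have hY : ∀ j < N, Xmin ≤ update X k x j ∧ update X k x j ≤ Xmax := by
    intro j hj
    rcases eq_or_ne j k with rfl | hjk
    · simpa using hx
    · simpa [hjk] using hX j hj
  have hYk := (drawdown_le_iff (hm _ (k + 1))).1 (h _ hY (k + 1) hk)
  rw [mul_runMax_succ_le_iff (sub_nonneg.2 hdmax1.le) (sub_le_self _ hdmax0) (hm _ k).le,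
    wealth_update_succ, runMax_congr fun i hi => wealth_update_of_le X x hi] at hYk
  linarith [sub_mul_runMax_eq_modFn dmax (π k fun i => X i) x (rf k) (hm X k) hWk_pos.ne']

end Modulation

theorem drawdown_modulation_lemma_general
    (dmax Xmin Xmax : ℝ)
    (hdmax0 : 0 < dmax) (hdmax1 : dmax < 1)
    (hXmin0 : Xmin < 0)
    (N : ℕ)
    (rf : ℕ → ℝ) (hrf : ∀ k < N, 0 ≤ rf k ∧ rf k < Xmax)
    (V0 : ℝ) (hV0 : 0 < V0)
    (π : (k : ℕ) → (Fin k → ℝ) → ℝ) :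
    (∀ X : ℕ → ℝ, (∀ k < N, Xmin ≤ X k ∧ X k ≤ Xmax) →
        ∀ k ≤ N, drawdown (wealth V0 rf π X) k ≤ dmax) ↔
    (∀ X : ℕ → ℝ, (∀ k < N, Xmin ≤ X k ∧ X k ≤ Xmax) →
        ∀ k < N,
          -((modFn dmax (wealth V0 rf π X) k + rf k) / (Xmax - rf k)) *
              wealth V0 rf π X k ≤ π k (fun i => X i) ∧
          π k (fun i => X i) ≤
            ((modFn dmax (wealth V0 rf π X) k + rf k) / (|Xmin| + rf k)) *
              wealth V0 rf π X k) :=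
  ⟨fun h _ hX _ hk =>
      modulationBounds_of_drawdown_le hdmax0.le hdmax1 hXmin0 hrf hV0 h hX hk,
    fun h _ hX => drawdown_le_of_modulationBounds hdmax0.le hdmax1 hXmin0 hrf hV0 hX (h _ hX)⟩

/-- Drawdown Modulation Lemma: a causal policy guarantees
`d(k) ≤ d_max` for all `0 ≤ k ≤ N` along every return sequence in
`[X_min, X_max]^N` if and only if it satisfies the modulation bounds at every
stage along every return sequence. -/
theorem drawdown_modulation_lemma
    (dmax Xmin Xmax : ℝ)
    (hdmax0 : 0 < dmax) (hdmax1 : dmax < 1)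
    (hXmin1 : -1 < Xmin) (hXmin0 : Xmin < 0) (hXmax : 0 < Xmax)
    (N : ℕ) (hN : 0 < N)
    (rf : ℕ → ℝ) (hrf : ∀ k < N, 0 ≤ rf k ∧ rf k < Xmax)
    (V0 : ℝ) (hV0 : 0 < V0)
    (π : (k : ℕ) → (Fin k → ℝ) → ℝ) :
    (∀ X : ℕ → ℝ, (∀ k < N, Xmin ≤ X k ∧ X k ≤ Xmax) →
        ∀ k ≤ N, drawdown (wealth V0 rf π X) k ≤ dmax) ↔
    (∀ X : ℕ → ℝ, (∀ k < N, Xmin ≤ X k ∧ X k ≤ Xmax) →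
        ∀ k < N,
          -((modFn dmax (wealth V0 rf π X) k + rf k) / (Xmax - rf k)) *
              wealth V0 rf π X k ≤ π k (fun i => X i) ∧
          π k (fun i => X i) ≤
            ((modFn dmax (wealth V0 rf π X) k + rf k) / (|Xmin| + rf k)) *
              wealth V0 rf π X k) :=
  drawdown_modulation_lemma_general dmax Xmin Xmax hdmax0 hdmax1 hXmin0 N rf hrf V0 hV0 π
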